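/- arXiv:2506.12578 — 2 statements merged into one kernel-verified Lean document; each statement's English description precedes it below -/
import Mathlib

section
/- The operator S on ℓ^∞ defined by (S x)_1 = 0 and (S x)_n = Σ_{k=1}^{n-1} x_k / 2^k for n ≥ 2 is a positive Levi operator lying in the norm closure of the positive finite rank operators on ℓ^∞. -/
/-- Order convergence of a net. -/
def OConvNet {ι F : Type*} [Preorder ι] [Lattice F] [AddCommGroup F]
    (x : ι → F) (x₀ : F) : Prop :=
  ∃ D : Set F, D.Nonempty ∧ DirectedOn (· ≥ ·) D ∧ IsGLB D 0 ∧
    ∀ y ∈ D, ∃ α₀, ∀ α, α₀ ≤ α → |x α - x₀| ≤ y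

/-- Order convergence of a sequence. -/
def OConvSeq {F : Type*} [Lattice F] [AddCommGroup F] (x : ℕ → F) (x₀ : F) : Prop :=
  ∃ y : ℕ → F, Antitone y ∧ IsGLB (Set.range y) 0 ∧
    ∀ m, ∃ n₀, ∀ n, n₀ ≤ n → |x n - x₀| ≤ y m

/-- A net is order-Cauchy if its double net of differences order converges to `0`. -/
def OCauchyNet {ι F : Type*} [Preorder ι] [Lattice F] [AddCommGroup F]
    (x : ι → F) : Prop :=
  OConvNet (fun p : ι × ι => x p.1 - x p.2) (0 : F)

/-- A sequence is order-Cauchy if its double sequence of differences order converges to `0`. -/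
def OCauchySeq' {F : Type*} [Lattice F] [AddCommGroup F] (x : ℕ → F) : Prop :=
  OConvNet (fun p : ℕ × ℕ => x p.1 - x p.2) (0 : F)

section Maps
variable {E F : Type*} [Lattice E] [AddCommGroup E] [Norm E] [Lattice F] [AddCommGroup F]

def IsLeviMap (T : E → F) : Prop :=
  ∀ (ι : Type) [Nonempty ι] [Preorder ι] [IsDirected ι (· ≤ ·)],
    ∀ x : ι → E, Monotone x → (∃ C, ∀ α, ‖x α‖ ≤ C) →
      ∃ x₀ : E, OConvNet (fun α => T (x α)) (T x₀)

def IsSigmaLeviMap (T : E → F) : Prop :=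
  ∀ x : ℕ → E, Monotone x → (∃ C, ∀ n, ‖x n‖ ≤ C) →
    ∃ x₀ : E, OConvSeq (fun n => T (x n)) (T x₀)

def IsCqLeviMap (T : E → F) : Prop :=
  ∀ (ι : Type) [Nonempty ι] [Preorder ι] [IsDirected ι (· ≤ ·)],
    ∀ x : ι → E, Monotone x → (∃ C, ∀ α, ‖x α‖ ≤ C) →
      ∃ y₀ : F, OConvNet (fun α => T (x α)) y₀

def IsCqSigmaLeviMap (T : E → F) : Prop :=
  ∀ x : ℕ → E, Monotone x → (∃ C, ∀ n, ‖x n‖ ≤ C) →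
    ∃ y₀ : F, OConvSeq (fun n => T (x n)) y₀

def IsQLeviMap (T : E → F) : Prop :=
  ∀ (ι : Type) [Nonempty ι] [Preorder ι] [IsDirected ι (· ≤ ·)],
    ∀ x : ι → E, Monotone x → (∃ C, ∀ α, ‖x α‖ ≤ C) →
      OCauchyNet (fun α => T (x α))

def IsQSigmaLeviMap (T : E → F) : Prop :=
  ∀ x : ℕ → E, Monotone x → (∃ C, ∀ n, ‖x n‖ ≤ C) →
    OCauchySeq' (fun n => T (x n))

end Maps

open Filter Topology

/-- The subspace `c` of convergent real sequences. -/
def cSub : Submodule ℝ (ℕ → ℝ) where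
  carrier := {x | ∃ l : ℝ, Tendsto x atTop (nhds l)}
  add_mem' := by rintro x y ⟨l, hl⟩ ⟨m, hm⟩; exact ⟨l + m, hl.add hm⟩
  zero_mem' := ⟨0, tendsto_const_nhds⟩
  smul_mem' := by rintro c x ⟨l, hl⟩; exact ⟨c * l, hl.const_mul c⟩

/-- The subspace `c₀` of real null sequences. -/
def c0Sub : Submodule ℝ (ℕ → ℝ) where
  carrier := {x | Tendsto x atTop (nhds 0)}
  add_mem' := by intro x y hx hy; have := hx.add hy; rw [add_zero] at this; exact this
  zero_mem' := tendsto_const_nhds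
  smul_mem' := by intro c x hx; have := hx.const_mul c; rw [mul_zero] at this; exact this

/-- The subspace `ℓ^∞` of bounded real sequences. -/
def LinfSub : Submodule ℝ (ℕ → ℝ) where
  carrier := {x | ∃ C : ℝ, ∀ n, |x n| ≤ C}
  add_mem' := by
    rintro x y ⟨C, hC⟩ ⟨D, hD⟩
    exact ⟨C + D, fun n => (abs_add_le _ _).trans (add_le_add (hC n) (hD n))⟩
  zero_mem' := ⟨0, fun n => by simp⟩
  smul_mem' := by
    rintro c x ⟨C, hC⟩
    exact ⟨|c| * C, fun n => by
      simpa [abs_mul] using mul_le_mul_of_nonneg_left (hC n) (abs_nonneg c)⟩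

instance : Lattice cSub :=
  { (inferInstance : PartialOrder cSub) with
    sup := fun x y => ⟨x.1 ⊔ y.1, by
      obtain ⟨l, hl⟩ := x.2; obtain ⟨m, hm⟩ := y.2; exact ⟨l ⊔ m, hl.max hm⟩⟩
    inf := fun x y => ⟨x.1 ⊓ y.1, by
      obtain ⟨l, hl⟩ := x.2; obtain ⟨m, hm⟩ := y.2; exact ⟨l ⊓ m, hl.min hm⟩⟩
    le_sup_left := fun a b => (le_sup_left : a.1 ≤ a.1 ⊔ b.1)
    le_sup_right := fun a b => (le_sup_right : b.1 ≤ a.1 ⊔ b.1)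
    sup_le := fun a b c h₁ h₂ => (sup_le h₁ h₂ : a.1 ⊔ b.1 ≤ c.1)
    inf_le_left := fun a b => (inf_le_left : a.1 ⊓ b.1 ≤ a.1)
    inf_le_right := fun a b => (inf_le_right : a.1 ⊓ b.1 ≤ b.1)
    le_inf := fun a b c h₁ h₂ => (le_inf h₁ h₂ : a.1 ≤ b.1 ⊓ c.1) }

instance : Lattice c0Sub :=
  { (inferInstance : PartialOrder c0Sub) with
    sup := fun x y => ⟨x.1 ⊔ y.1, by
      have := x.2.max y.2; rw [max_self] at this; exact this⟩
    inf := fun x y => ⟨x.1 ⊓ y.1, by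
      have := x.2.min y.2; rw [min_self] at this; exact this⟩
    le_sup_left := fun a b => (le_sup_left : a.1 ≤ a.1 ⊔ b.1)
    le_sup_right := fun a b => (le_sup_right : b.1 ≤ a.1 ⊔ b.1)
    sup_le := fun a b c h₁ h₂ => (sup_le h₁ h₂ : a.1 ⊔ b.1 ≤ c.1)
    inf_le_left := fun a b => (inf_le_left : a.1 ⊓ b.1 ≤ a.1)
    inf_le_right := fun a b => (inf_le_right : a.1 ⊓ b.1 ≤ b.1)
    le_inf := fun a b c h₁ h₂ => (le_inf h₁ h₂ : a.1 ≤ b.1 ⊓ c.1) }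

instance : Lattice LinfSub :=
  { (inferInstance : PartialOrder LinfSub) with
    sup := fun x y => ⟨x.1 ⊔ y.1, by
      obtain ⟨C, hC⟩ := x.2; obtain ⟨D, hD⟩ := y.2
      exact ⟨C ⊔ D, fun n => by
        have h1 := hC n; have h2 := hD n
        simp only [Pi.sup_apply]
        rcases le_total (x.1 n) (y.1 n) with h | h
        · rw [sup_eq_right.2 h]; exact h2.trans le_sup_right
        · rw [sup_eq_left.2 h]; exact h1.trans le_sup_left⟩⟩
    inf := fun x y => ⟨x.1 ⊓ y.1, by
      obtain ⟨C, hC⟩ := x.2; obtain ⟨D, hD⟩ := y.2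
      exact ⟨C ⊔ D, fun n => by
        have h1 := hC n; have h2 := hD n
        simp only [Pi.inf_apply]
        rcases le_total (x.1 n) (y.1 n) with h | h
        · rw [inf_eq_left.2 h]; exact h1.trans le_sup_left
        · rw [inf_eq_right.2 h]; exact h2.trans le_sup_right⟩⟩
    le_sup_left := fun a b => (le_sup_left : a.1 ≤ a.1 ⊔ b.1)
    le_sup_right := fun a b => (le_sup_right : b.1 ≤ a.1 ⊔ b.1)
    sup_le := fun a b c h₁ h₂ => (sup_le h₁ h₂ : a.1 ⊔ b.1 ≤ c.1)
    inf_le_left := fun a b => (inf_le_left : a.1 ⊓ b.1 ≤ a.1)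
    inf_le_right := fun a b => (inf_le_right : a.1 ⊓ b.1 ≤ b.1)
    le_inf := fun a b c h₁ h₂ => (le_inf h₁ h₂ : a.1 ≤ b.1 ⊓ c.1) }

noncomputable instance : Norm cSub := ⟨fun x => ⨆ n, |x.1 n|⟩
noncomputable instance : Norm c0Sub := ⟨fun x => ⨆ n, |x.1 n|⟩
noncomputable instance : Norm LinfSub := ⟨fun x => ⨆ n, |x.1 n|⟩

/-!
`S` sums the coordinates against the summable positive weights `w k = 2^-(k+1)`. A norm-bounded
increasing net converges coordinatewise to its supremum, and dominated convergence for the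
weighted series makes the images converge uniformly in the output coordinate, hence in order,
dominated by the positive constants. Cutting the weights off after `N` terms gives a positive
operator of rank at most `N`, at norm distance at most `∑_{k ≥ N} w k` from `S`.
-/

open Finset

namespace LinfSub

lemma abs_apply_le_norm (x : LinfSub) (n : ℕ) : |x.1 n| ≤ ‖x‖ :=
  le_ciSup (f := fun n => |x.1 n|)
    (by obtain ⟨C, hC⟩ := x.2; exact ⟨C, by rintro _ ⟨n, rfl⟩; exact hC n⟩) n

lemma norm_le_of_forall_abs_apply_le {x : LinfSub} {C : ℝ} (h : ∀ n, |x.1 n| ≤ C) : ‖x‖ ≤ C :=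
  ciSup_le h

def const (c : ℝ) : LinfSub := ⟨fun _ => c, |c|, fun _ => le_rfl⟩

noncomputable def indicatorIoi (i : ℕ) : LinfSub :=
  ⟨(Set.Ioi i).indicator 1, 1, fun n => by
    rw [Set.indicator_apply]; split_ifs <;> simp⟩

lemma isGLB_const_Ioi : IsGLB (const '' Set.Ioi 0) 0 :=
  ⟨by rintro _ ⟨δ, hδ, rfl⟩ n; exact le_of_lt hδ,
   fun b hb n => le_of_forall_pos_le_add fun δ hδ => by
     show b.1 n ≤ 0 + δ; rw [zero_add]; exact hb ⟨δ, hδ, rfl⟩ n⟩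

lemma oConvNet_of_tendstoUniformly {ι : Type*} [Nonempty ι] [Preorder ι]
    [IsDirected ι (· ≤ ·)] {y : ι → LinfSub} {y₀ : LinfSub}
    (h : TendstoUniformly (fun α n => (y α).1 n) y₀.1 atTop) : OConvNet y y₀ := by
  refine ⟨const '' Set.Ioi 0, ⟨const 1, 1, Set.mem_Ioi.2 one_pos, rfl⟩, ?_, isGLB_const_Ioi, ?_⟩
  · rintro _ ⟨a, ha, rfl⟩ _ ⟨b, hb, rfl⟩
    exact ⟨const (min a b), ⟨_, Set.mem_Ioi.2 (lt_min ha hb), rfl⟩,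
      fun _ => min_le_left a b, fun _ => min_le_right a b⟩
  · rintro _ ⟨δ, hδ, rfl⟩
    obtain ⟨α₀, hα₀⟩ := eventually_atTop.1 (Metric.tendstoUniformly_iff.1 h δ hδ)
    refine ⟨α₀, fun α hα n => ?_⟩
    have := hα₀ α hα n
    rw [Real.dist_eq, abs_sub_comm] at this
    exact this.le

lemma exists_forall_tendsto_of_monotone {ι : Type*} [Nonempty ι] [Preorder ι]
    [IsDirected ι (· ≤ ·)] {x : ι → LinfSub} (hx : Monotone x) {C : ℝ}
    (hC : ∀ α, ‖x α‖ ≤ C) :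
    ∃ x₀ : LinfSub, (∀ n, |x₀.1 n| ≤ C) ∧
      ∀ n, Tendsto (fun α => (x α).1 n) atTop (𝓝 (x₀.1 n)) := by
  have hxC α n : |(x α).1 n| ≤ C := (abs_apply_le_norm _ n).trans (hC α)
  have hlim n : Tendsto (fun α => (x α).1 n) atTop (𝓝 (⨆ α, (x α).1 n)) :=
    tendsto_atTop_ciSup (fun _ _ h => hx h n)
      ⟨C, by rintro _ ⟨α, rfl⟩; exact (abs_le.1 (hxC α n)).2⟩
  have hsupC n : |⨆ α, (x α).1 n| ≤ C := le_of_tendsto' (hlim n).abs fun α => hxC α n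
  exact ⟨⟨fun n => ⨆ α, (x α).1 n, C, hsupC⟩, hsupC, hlim⟩

end LinfSub

section WeightedPartialSums

variable {w : ℕ → ℝ}

lemma tendstoUniformly_sum_range_mul {α : Type*} {l : Filter α} {f : α → ℕ → ℝ} {g : ℕ → ℝ}
    {C : ℝ} (hw : Summable w) (hw0 : ∀ k, 0 ≤ w k) (hf : ∀ a k, |f a k| ≤ C)
    (hg : ∀ k, |g k| ≤ C) (hfg : ∀ k, Tendsto (f · k) l (𝓝 (g k))) :
    TendstoUniformly (fun a m => ∑ k ∈ range m, f a k * w k)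
      (fun m => ∑ k ∈ range m, g k * w k) l := by
  have hbound a k : |f a k - g k| * w k ≤ 2 * C * w k := by
    gcongr
    · exact hw0 k
    · linarith [abs_sub (f a k) (g k), hf a k, hg k]
  have hsum a : Summable fun k => |f a k - g k| * w k :=
    (hw.mul_left (2 * C)).of_nonneg_of_le (fun k => mul_nonneg (abs_nonneg _) (hw0 k)) (hbound a)
  have herr : Tendsto (fun a => ∑' k, |f a k - g k| * w k) l (𝓝 0) := by
    have := tendsto_tsum_of_dominated_convergence (hw.mul_left (2 * C))
      (fun k => by simpa using (((hfg k).sub_const (g k)).abs.mul_const (w k)))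
      (Eventually.of_forall fun a k => by
        rw [Real.norm_of_nonneg (mul_nonneg (abs_nonneg _) (hw0 k))]; exact hbound a k)
    simpa using this
  refine Metric.tendstoUniformly_iff.2 fun ε hε => (herr.eventually (gt_mem_nhds hε)).mono
    fun a ha m => lt_of_le_of_lt ?_ ha
  calc dist (∑ k ∈ range m, g k * w k) (∑ k ∈ range m, f a k * w k)
      = |∑ k ∈ range m, (f a k - g k) * w k| := by
        rw [Real.dist_eq, abs_sub_comm, ← sum_sub_distrib]; simp only [sub_mul]
    _ ≤ ∑ k ∈ range m, |f a k - g k| * w k := by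
        refine (abs_sum_le_sum_abs _ _).trans_eq (sum_congr rfl fun k _ => ?_)
        rw [abs_mul, abs_of_nonneg (hw0 k)]
    _ ≤ ∑' k, |f a k - g k| * w k :=
        (hsum a).sum_le_tsum _ fun k _ => mul_nonneg (abs_nonneg _) (hw0 k)

lemma abs_sum_range_sub_sum_range_min_le (hw : Summable w) (hw0 : ∀ k, 0 ≤ w k)
    {x : ℕ → ℝ} {C : ℝ} (hx : ∀ k, |x k| ≤ C) (N m : ℕ) :
    |∑ k ∈ range m, x k * w k - ∑ k ∈ range (min N m), x k * w k| ≤ C * ∑' k, w (k + N) := by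
  have hC : 0 ≤ C := (abs_nonneg _).trans (hx 0)
  have htail : 0 ≤ ∑' k, w (k + N) := tsum_nonneg fun k => hw0 _
  rcases le_total m N with hm | hm
  · rw [min_eq_right hm, sub_self, abs_zero]; positivity
  rw [min_eq_left hm, ← sum_Ico_eq_sub _ hm]
  calc |∑ k ∈ Ico N m, x k * w k|
      ≤ ∑ k ∈ Ico N m, C * w k := by
        refine (abs_sum_le_sum_abs _ _).trans (sum_le_sum fun k _ => ?_)
        rw [abs_mul, abs_of_nonneg (hw0 k)]
        exact mul_le_mul_of_nonneg_right (hx k) (hw0 k)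
    _ = C * ∑ k ∈ range (m - N), w (k + N) := by
        rw [← mul_sum, sum_Ico_eq_sum_range]; simp only [add_comm N]
    _ ≤ C * ∑' k, w (k + N) := by
        gcongr
        exact ((summable_nat_add_iff N).2 hw).sum_le_tsum _ fun k _ => hw0 _

end WeightedPartialSums

namespace LinfSub

noncomputable def truncatedPartialSums (w : ℕ → ℝ) (N : ℕ) : LinfSub →ₗ[ℝ] LinfSub :=
  ∑ i : Fin N, (w i • (LinearMap.proj (i : ℕ) ∘ₗ LinfSub.subtype)).smulRight (indicatorIoi i)

lemma truncatedPartialSums_apply (w : ℕ → ℝ) (N : ℕ) (x : LinfSub) :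
    truncatedPartialSums w N x =
      ∑ i : Fin N, (w i • (LinearMap.proj (i : ℕ) ∘ₗ LinfSub.subtype)) x • indicatorIoi i := by
  simp [truncatedPartialSums, LinearMap.sum_apply]

lemma truncatedPartialSums_apply_coe (w : ℕ → ℝ) (N : ℕ) (x : LinfSub) (m : ℕ) :
    (truncatedPartialSums w N x).1 m = ∑ k ∈ range (min N m), x.1 k * w k := by
  rw [truncatedPartialSums_apply, Submodule.coe_sum, Finset.sum_apply]
  simp only [indicatorIoi, LinearMap.smul_apply, LinearMap.comp_apply, LinearMap.proj_apply,
    Submodule.subtype_apply, Submodule.coe_smul, Pi.smul_apply, Set.indicator_apply,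
    Set.mem_Ioi, Pi.one_apply, smul_eq_mul, mul_ite, mul_one, mul_zero]
  rw [Fin.sum_univ_eq_sum_range (fun k => if k < m then w k * x.1 k else 0), ← sum_filter]
  refine sum_congr (by ext k; simp) fun k _ => mul_comm _ _

lemma nonneg_apply_of_forall_apply_eq_sum {T : LinfSub → LinfSub} {w : ℕ → ℝ}
    {s : ℕ → Finset ℕ} (hT : ∀ x m, (T x).1 m = ∑ k ∈ s m, x.1 k * w k) (hw0 : ∀ k, 0 ≤ w k)
    {x : LinfSub} (hx : 0 ≤ x) : 0 ≤ T x :=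
  fun m => by rw [hT]; exact sum_nonneg fun k _ => mul_nonneg (hx k) (hw0 k)

variable {T : LinfSub → LinfSub} {w : ℕ → ℝ}
  (hT : ∀ x m, (T x).1 m = ∑ k ∈ range m, x.1 k * w k)
include hT

lemma isLeviMap_of_weightedPartialSums (hw : Summable w) (hw0 : ∀ k, 0 ≤ w k) : IsLeviMap T := by
  intro ι _ _ _ x hx ⟨C, hC⟩
  obtain ⟨x₀, hx₀C, hx₀⟩ := exists_forall_tendsto_of_monotone hx hC
  refine ⟨x₀, oConvNet_of_tendstoUniformly ?_⟩
  simp only [hT, show (T x₀).1 = _ from funext (hT x₀)]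
  exact tendstoUniformly_sum_range_mul hw hw0 (fun α k => (abs_apply_le_norm _ k).trans (hC α))
    hx₀C hx₀

lemma norm_sub_truncatedPartialSums_le (hw : Summable w) (hw0 : ∀ k, 0 ≤ w k) {N : ℕ} {ε : ℝ}
    (hN : ∑' k, w (k + N) ≤ ε) (x : LinfSub) : ‖T x - truncatedPartialSums w N x‖ ≤ ε * ‖x‖ :=
  norm_le_of_forall_abs_apply_le fun m => by
    rw [Submodule.coe_sub, Pi.sub_apply, hT, truncatedPartialSums_apply_coe, mul_comm]
    exact (abs_sum_range_sub_sum_range_min_le hw hw0 (abs_apply_le_norm x) N m).trans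
      (mul_le_mul_of_nonneg_left hN ((abs_nonneg _).trans (abs_apply_le_norm x 0)))

end LinfSub

/-- the operator `S` on `ℓ^∞` given by `(S x)_1 = 0`,
`(S x)_n = ∑_{k=1}^{n-1} x_k / 2^k` for `n ≥ 2` (0-based: `(S x)_m = ∑_{k<m} x_k / 2^(k+1)`)
is a positive Levi operator lying in the norm closure of the positive finite rank
operators on `ℓ^∞`. -/
theorem S_linf_positive_levi_in_closure_of_finiteRank
    (S : LinfSub → LinfSub)
    (hS : ∀ (x : LinfSub) (m : ℕ),
      (S x).1 m = ∑ k ∈ Finset.range m, x.1 k / 2 ^ (k + 1)) :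
    (∀ x : LinfSub, 0 ≤ x → 0 ≤ S x) ∧ IsLeviMap S ∧
    (∀ ε : ℝ, 0 < ε → ∃ R : LinfSub →ₗ[ℝ] LinfSub,
      (∃ (n : ℕ) (f : Fin n → (LinfSub →ₗ[ℝ] ℝ)) (v : Fin n → LinfSub),
        ∀ x, R x = ∑ i, f i x • v i) ∧
      (∀ x : LinfSub, 0 ≤ x → 0 ≤ R x) ∧
      (∀ x : LinfSub, ‖S x - R x‖ ≤ ε * ‖x‖)) := by
  set w : ℕ → ℝ := fun k => (1 / 2) ^ (k + 1)
  have hw : Summable w := (summable_nat_add_iff 1).2 summable_geometric_two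
  have hw0 k : 0 ≤ w k := by positivity
  have hT x m : (S x).1 m = ∑ k ∈ range m, x.1 k * w k := by
    simp only [hS, w, one_div_pow, mul_one_div]
  refine ⟨fun x => LinfSub.nonneg_apply_of_forall_apply_eq_sum hT hw0,
    LinfSub.isLeviMap_of_weightedPartialSums hT hw hw0, fun ε hε => ?_⟩
  obtain ⟨N, hN⟩ := ((tendsto_sum_nat_add w).eventually (gt_mem_nhds hε)).exists
  exact ⟨LinfSub.truncatedPartialSums w N, ⟨N, _, _, LinfSub.truncatedPartialSums_apply w N⟩,
    fun x => LinfSub.nonneg_apply_of_forall_apply_eq_sum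
      (LinfSub.truncatedPartialSums_apply_coe w N) hw0,
    LinfSub.norm_sub_truncatedPartialSums_le hT hw hw0 hN.le⟩
end

section
/- Neither the set of Levi operators on c nor the set of σ-Levi operators on c is closed in the operator norm: the finite rank operators T_n x = Σ_{k=1}^n (x_k / k) e_k are Levi operators converging in operator norm to the diagonal operator T x = Σ_{k=1}^∞ (x_k / k) e_k, which is not σ-Levi. -/
open Filter Topology

/-!
Order convergence in `c` implies coordinatewise convergence, and conversely an increasing net
order converges to any element that is its coordinatewise supremum. Each `Tₙ` is a positive
diagonal operator with finitely many nonzero entries, so it maps an increasing norm-bounded net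
`(x_α)` onto an increasing net whose coordinatewise supremum is `Tₙ x` for `x` the truncation of
`sup_α x_α` to the first `n` coordinates; and `‖Tₙ - T‖ ≤ 1 / (n + 1)`. For `T`, take the
truncations `xₙ` of the sequence `(1, 0, 1, 0, …)`: if `T xₙ` order converged to some `T x`, then,
the diagonal entries of `T` being nonzero, `x` would be `(1, 0, 1, 0, …)`, which is not in `c`.
-/

open Set

lemma OConvSeq.oConvNet {F : Type*} [Lattice F] [AddCommGroup F] {x : ℕ → F} {x₀ : F}
    (h : OConvSeq x x₀) : OConvNet x x₀ := by
  obtain ⟨y, hy, hglb, hbound⟩ := h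
  refine ⟨range y, range_nonempty y, ?_, hglb, ?_⟩
  · rintro _ ⟨m, rfl⟩ _ ⟨m', rfl⟩
    exact ⟨y (max m m'), mem_range_self _, hy (le_max_left m m'), hy (le_max_right m m')⟩
  · rintro _ ⟨m, rfl⟩
    exact hbound m

namespace cSub

lemma sub_apply (a b : cSub) (k : ℕ) : (a - b).1 k = a.1 k - b.1 k := rfl

lemma abs_apply (a : cSub) (k : ℕ) : (|a|).1 k = |a.1 k| := by
  show a.1 k ⊔ (-a).1 k = _
  rw [abs_eq_max_neg]
  rfl

lemma abs_apply_le_norm (a : cSub) (k : ℕ) : |a.1 k| ≤ ‖a‖ := by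
  obtain ⟨l, hl⟩ := a.2
  exact le_ciSup hl.abs.bddAbove_range k

lemma norm_nonneg (a : cSub) : 0 ≤ ‖a‖ := (abs_nonneg _).trans (abs_apply_le_norm a 0)

lemma norm_le {a : cSub} {C : ℝ} (h : ∀ k, |a.1 k| ≤ C) : ‖a‖ ≤ C := ciSup_le h

lemma mem_of_eventually_eq_zero {f : ℕ → ℝ} (h : ∀ᶠ k in atTop, f k = 0) : f ∈ cSub :=
  ⟨0, tendsto_const_nhds.congr' (h.mono fun _ hk => hk.symm)⟩

def single (k : ℕ) (ε : ℝ) : cSub :=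
  ⟨Pi.single k ε, mem_of_eventually_eq_zero <|
    (eventually_gt_atTop k).mono fun _ hj => by simp [hj.ne']⟩

def trunc (f : ℕ → ℝ) (n : ℕ) : cSub :=
  ⟨fun k => if k < n then f k else 0, mem_of_eventually_eq_zero <|
    (eventually_ge_atTop n).mono fun _ hk => if_neg hk.not_gt⟩

lemma trunc_apply (f : ℕ → ℝ) (n k : ℕ) : (trunc f n).1 k = if k < n then f k else 0 := rfl

lemma exists_apply_lt_of_isGLB_zero {S : Set cSub} (hS : IsGLB S 0) (k : ℕ) {ε : ℝ}
    (hε : 0 < ε) : ∃ y ∈ S, y.1 k < ε := by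
  by_contra! h
  have hlower : single k ε ∈ lowerBounds S := by
    intro y hy j
    rcases eq_or_ne j k with rfl | hj
    · simpa [single] using h y hy
    · simpa [single, hj] using hS.1 hy j
  have := hS.2 hlower k
  simp [single] at this
  linarith

end cSub

lemma OConvNet.tendsto_apply {ι : Type*} [Preorder ι] {w : ι → cSub} {w₀ : cSub}
    (h : OConvNet w w₀) (k : ℕ) : Tendsto (fun α => (w α).1 k) atTop (𝓝 (w₀.1 k)) := by
  obtain ⟨D, -, -, hglb, hbound⟩ := h
  refine Metric.tendsto_nhds.2 fun ε hε => ?_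
  obtain ⟨z, hzD, hz⟩ := cSub.exists_apply_lt_of_isGLB_zero hglb k hε
  obtain ⟨α₀, hα₀⟩ := hbound z hzD
  filter_upwards [eventually_ge_atTop α₀] with α hα
  have := hα₀ α hα k
  rw [cSub.abs_apply, cSub.sub_apply] at this
  exact this.trans_lt hz

lemma oConvNet_of_monotone_of_isLUB_apply {ι : Type*} [Nonempty ι] [Preorder ι] [IsDirected ι (· ≤ ·)]
    {w : ι → cSub} (hw : Monotone w) {w₀ : cSub}
    (h : ∀ k, IsLUB (range fun α => (w α).1 k) (w₀.1 k)) : OConvNet w w₀ := by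
  have hle : ∀ α k, (w α).1 k ≤ w₀.1 k := fun α k => (h k).1 ⟨α, rfl⟩
  refine ⟨range fun α => w₀ - w α, ?_, ?_, ⟨?_, ?_⟩, ?_⟩
  · exact range_nonempty _
  · rintro _ ⟨α, rfl⟩ _ ⟨β, rfl⟩
    obtain ⟨γ, hαγ, hβγ⟩ := directed_of (· ≤ ·) α β
    exact ⟨_, mem_range_self γ, sub_le_sub_left (hw hαγ) _, sub_le_sub_left (hw hβγ) _⟩
  · rintro _ ⟨α, rfl⟩ k
    exact sub_nonneg.2 (hle α k)
  · intro u hu k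
    refine le_of_forall_pos_le_add fun ε hε => ?_
    obtain ⟨_, ⟨α, rfl⟩, hlt, -⟩ := (h k).exists_between (sub_lt_self _ hε)
    have := hu ⟨α, rfl⟩ k
    rw [cSub.sub_apply] at this
    show u.1 k ≤ 0 + ε
    linarith
  · rintro _ ⟨α₀, rfl⟩
    refine ⟨α₀, fun α hα k => ?_⟩
    rw [cSub.abs_apply, cSub.sub_apply, cSub.sub_apply, abs_sub_comm, abs_of_nonneg (sub_nonneg.2 (hle α k))]
    exact sub_le_sub_left (hw hα k) _

lemma isLeviMap_of_apply_eq_ite {S : cSub → cSub} (n : ℕ) (d : ℕ → ℝ) (hd : ∀ k, 0 ≤ d k)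
    (hS : ∀ a k, (S a).1 k = if k < n then d k * a.1 k else 0) : IsLeviMap S := by
  intro ι _ _ _ x hx ⟨C, hC⟩
  have hbdd : ∀ k, BddAbove (range fun α => (x α).1 k) := fun k =>
    ⟨C, by rintro _ ⟨α, rfl⟩; exact (le_abs_self _).trans ((cSub.abs_apply_le_norm _ k).trans (hC α))⟩
  refine ⟨cSub.trunc (fun k => ⨆ α, (x α).1 k) n,
    oConvNet_of_monotone_of_isLUB_apply (fun α β hαβ k => ?_) fun k => ?_⟩
  · rw [hS, hS]
    split_ifs
    exacts [mul_le_mul_of_nonneg_left (hx hαβ k) (hd k), le_rfl]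
  · simp only [hS, cSub.trunc_apply]
    split_ifs
    · simpa only [← range_comp, Function.comp_def] using (isLUB_ciSup (hbdd k)).mul_left (hd k)
    · simpa only [range_const] using isLUB_singleton

lemma norm_truncDiag_sub_diag_le {T : cSub → cSub}
    (hT : ∀ (a : cSub) (k : ℕ), (T a).1 k = a.1 k / (k + 1)) {Tn : ℕ → cSub → cSub}
    (hTn : ∀ (n : ℕ) (a : cSub) (k : ℕ), (Tn n a).1 k = if k < n then a.1 k / (k + 1) else 0)
    (n : ℕ) (a : cSub) : ‖Tn n a - T a‖ ≤ ‖a‖ / (n + 1) := by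
  refine cSub.norm_le fun k => ?_
  rw [cSub.sub_apply, hTn, hT]
  split_ifs with hk
  · rw [sub_self, abs_zero]
    exact div_nonneg (cSub.norm_nonneg a) (by positivity)
  · rw [zero_sub, abs_neg, abs_div, abs_of_pos (k.cast_add_one_pos : (0 : ℝ) < k + 1)]
    exact div_le_div₀ (cSub.norm_nonneg a) (cSub.abs_apply_le_norm a k) (by positivity)
      (by exact_mod_cast Nat.succ_le_succ (not_lt.1 hk))

def evenIndicator (k : ℕ) : ℝ := if Even k then 1 else 0

lemma not_tendsto_evenIndicator (l : ℝ) : ¬ Tendsto evenIndicator atTop (𝓝 l) := by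
  intro h
  have h_even : Tendsto (fun j => evenIndicator (2 * j)) atTop (𝓝 l) :=
    h.comp (strictMono_mul_left_of_pos two_pos).tendsto_atTop
  have h_odd : Tendsto (fun j => evenIndicator (2 * j + 1)) atTop (𝓝 l) :=
    h.comp ((strictMono_mul_left_of_pos two_pos).add_const 1).tendsto_atTop
  simp only [evenIndicator, even_two_mul, Nat.not_even_two_mul_add_one, if_true, if_false,
    tendsto_const_nhds_iff] at h_even h_odd
  linarith

def evenTrunc (n : ℕ) : cSub := cSub.trunc evenIndicator n

lemma evenTrunc_mono : Monotone evenTrunc := by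
  intro n m hnm k
  simp only [evenTrunc, cSub.trunc_apply, evenIndicator]
  split_ifs <;> first | omega | norm_num

lemma norm_evenTrunc_le (n : ℕ) : ‖evenTrunc n‖ ≤ 1 :=
  cSub.norm_le fun k => by simp only [evenTrunc, cSub.trunc_apply, evenIndicator]; split_ifs <;> simp

lemma not_oConvNet_diag_evenTrunc {T : cSub → cSub}
    (hT : ∀ (a : cSub) (k : ℕ), (T a).1 k = a.1 k / (k + 1)) (x : cSub) :
    ¬ OConvNet (fun n => T (evenTrunc n)) (T x) := by
  intro h
  obtain ⟨l, hl⟩ := x.2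
  refine not_tendsto_evenIndicator l (hl.congr fun k => ?_)
  have h_eventually : Tendsto (fun n => (T (evenTrunc n)).1 k) atTop
      (𝓝 (evenIndicator k / (k + 1))) :=
    tendsto_const_nhds.congr' <| (eventually_gt_atTop k).mono fun n hn => by
      dsimp only
      rw [hT, evenTrunc, cSub.trunc_apply, if_pos hn]
  have := tendsto_nhds_unique (h.tendsto_apply k) h_eventually
  rwa [hT, div_left_inj' (by positivity)] at this

/-- neither Levi nor σ-Levi operators on `c` are closed in the operator
norm: the finite rank operators `Tₙ x = ∑_{k=1}^n (x_k / k) e_k` are Levi and converge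
in operator norm to the diagonal operator `T x = ∑_{k=1}^∞ (x_k / k) e_k`, which is not
(σ-)Levi. -/
theorem levi_c_not_norm_closed
    (T : cSub → cSub) (hT : ∀ (a : cSub) (k : ℕ), (T a).1 k = a.1 k / (k + 1))
    (Tn : ℕ → cSub → cSub)
    (hTn : ∀ (n : ℕ) (a : cSub) (k : ℕ),
      (Tn n a).1 k = if k < n then a.1 k / (k + 1) else 0) :
    (∀ n, IsLeviMap (Tn n)) ∧
    (∀ ε : ℝ, 0 < ε → ∃ N : ℕ, ∀ n ≥ N, ∀ a : cSub, ‖Tn n a - T a‖ ≤ ε * ‖a‖) ∧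
    ¬ IsSigmaLeviMap T ∧ ¬ IsLeviMap T := by
  refine ⟨fun n => ?_, fun ε hε => ?_, fun hσ => ?_, fun hLevi => ?_⟩
  · refine isLeviMap_of_apply_eq_ite n (fun k => ((k : ℝ) + 1)⁻¹) (fun k => by positivity)
      fun a k => ?_
    rw [hTn, div_eq_inv_mul]
  · obtain ⟨N, hN⟩ := exists_nat_one_div_lt hε
    refine ⟨N, fun n hn a => (norm_truncDiag_sub_diag_le hT hTn n a).trans ?_⟩
    calc ‖a‖ / (n + 1) = 1 / (n + 1) * ‖a‖ := by ring
      _ ≤ 1 / (N + 1) * ‖a‖ := by gcongr; exact cSub.norm_nonneg a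
      _ ≤ ε * ‖a‖ := by gcongr; exact cSub.norm_nonneg a
  · obtain ⟨x, hx⟩ := hσ evenTrunc evenTrunc_mono ⟨1, norm_evenTrunc_le⟩
    exact not_oConvNet_diag_evenTrunc hT x hx.oConvNet
  · obtain ⟨x, hx⟩ := hLevi ℕ evenTrunc evenTrunc_mono ⟨1, norm_evenTrunc_le⟩
    exact not_oConvNet_diag_evenTrunc hT x hx
end
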